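/- arXiv:0812.1697 — 4 statements merged into one kernel-verified Lean document; each statement's English description precedes it below -/
import Mathlib

section
/- Let W : ℓ²(I) → H be a bounded linear operator on Hilbert spaces with W*W = c·Id for some constant c > 0, let g be a proper lsc convex function on H, and Φ = g ∘ (c⁻¹W*). Then prox_{γΦ}(x) = x − W((Id − prox_{c⁻¹γ g})(c⁻¹W* x)) for all x and γ > 0. -/
/-! With `u = c⁻¹W*x − q` and `p = x − Wu`, tightness gives `c⁻¹W*p = q` and
`‖x − p‖² = ‖Wu‖² = c‖u‖²`, while `‖c⁻¹W*(x − z)‖² ≤ c⁻¹‖x − z‖²` since `‖W*‖² = ‖W*W‖ = c`.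
Multiplying the minimality of `q`, tested at `c⁻¹W*z`, by `c` therefore bounds the objective of
`prox_{γΦ}` at `p` by its value at `z`. -/

open ContinuousLinearMap

def IsTightFrame {E F : Type*} [NormedAddCommGroup E] [InnerProductSpace ℝ E] [CompleteSpace E]
    [NormedAddCommGroup F] [InnerProductSpace ℝ F] [CompleteSpace F]
    (W : E →L[ℝ] F) (c : ℝ) : Prop :=
  adjoint W ∘L W = c • ContinuousLinearMap.id ℝ E

namespace IsTightFrame

variable {E F : Type*} [NormedAddCommGroup E] [InnerProductSpace ℝ E] [CompleteSpace E]
  [NormedAddCommGroup F] [InnerProductSpace ℝ F] [CompleteSpace F]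
  {W : E →L[ℝ] F} {c : ℝ}

theorem adjoint_apply_apply (hW : IsTightFrame W c) (h : E) : adjoint W (W h) = c • h :=
  congr($hW h)

theorem norm_sq_apply (hW : IsTightFrame W c) (h : E) : ‖W h‖ ^ 2 = c * ‖h‖ ^ 2 := by
  rw [← real_inner_self_eq_norm_sq, ← real_inner_self_eq_norm_sq, ← adjoint_inner_left,
    hW.adjoint_apply_apply, real_inner_smul_left]

theorem smul_adjoint_apply_sub_apply (hW : IsTightFrame W c) (hc : c ≠ 0) (x : F) (u : E) :
    c⁻¹ • adjoint W (x - W u) = c⁻¹ • adjoint W x - u := by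
  rw [map_sub, hW.adjoint_apply_apply, smul_sub, inv_smul_smul₀ hc]

theorem norm_sq_adjoint_apply_le (hW : IsTightFrame W c) (hc : 0 ≤ c) (v : F) :
    ‖adjoint W v‖ ^ 2 ≤ c * ‖v‖ ^ 2 := by
  have hnorm : ‖W‖ ^ 2 ≤ c := by
    calc ‖W‖ ^ 2 = ‖c • ContinuousLinearMap.id ℝ E‖ := by rw [← hW, norm_adjoint_comp_self, sq]
      _ ≤ ‖c‖ * ‖ContinuousLinearMap.id ℝ E‖ := opNorm_smul_le _ _
      _ ≤ c := by
        rw [Real.norm_of_nonneg hc]; exact mul_le_of_le_one_right hc norm_id_le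
  calc ‖adjoint W v‖ ^ 2 ≤ (‖W‖ * ‖v‖) ^ 2 := by
        gcongr; simpa only [LinearIsometryEquiv.norm_map] using (adjoint W).le_opNorm v
    _ ≤ c * ‖v‖ ^ 2 := by rw [mul_pow]; gcongr

theorem mul_norm_sq_smul_adjoint_apply_le (hW : IsTightFrame W c) (hc : 0 ≤ c) (v : F) :
    c * ‖c⁻¹ • adjoint W v‖ ^ 2 ≤ ‖v‖ ^ 2 := by
  rcases hc.eq_or_lt with rfl | hc_pos
  · simp only [zero_mul]; positivity
  calc c * ‖c⁻¹ • adjoint W v‖ ^ 2 = c⁻¹ * ‖adjoint W v‖ ^ 2 := by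
        rw [norm_smul, mul_pow, Real.norm_of_nonneg (inv_nonneg.2 hc)]; field_simp
    _ ≤ c⁻¹ * (c * ‖v‖ ^ 2) := by gcongr; exact hW.norm_sq_adjoint_apply_le hc v
    _ = ‖v‖ ^ 2 := by field_simp

end IsTightFrame

theorem EReal.coe_mul_mul_add_coe_le_of_le {c t r s : ℝ} (hc : 0 ≤ c) {a b : EReal}
    (h : (t : EReal) * a + r ≤ t * b + s) :
    ((c * t : ℝ) : EReal) * a + (c * r : ℝ) ≤ ((c * t : ℝ) : EReal) * b + (c * s : ℝ) := by
  have hc' : (0 : EReal) ≤ c := EReal.coe_nonneg.2 hc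
  have := mul_le_mul_of_nonneg_left h hc'
  simpa only [EReal.left_distrib_of_nonneg_of_ne_top hc' (EReal.coe_ne_top c), ← mul_assoc,
    EReal.coe_mul] using this

theorem prox_tight_frame_composition_general
    {I : Type*} {H : Type*}
    [NormedAddCommGroup H] [InnerProductSpace ℝ H] [CompleteSpace H]
    (W : H →L[ℝ] lp (fun _ : I => ℝ) 2) (c : ℝ) (hc : 0 < c)
    (htight : (ContinuousLinearMap.adjoint W) ∘L W = c • ContinuousLinearMap.id ℝ H)
    (g : H → EReal)
    (γ : ℝ) (x : lp (fun _ : I => ℝ) 2) (q : H)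
    -- `q = prox_{c⁻¹γ g}(c⁻¹ W* x)` :
    (hq : ∀ z : H,
      ((c⁻¹ * γ : ℝ) : EReal) * g q
          + ((‖c⁻¹ • (ContinuousLinearMap.adjoint W) x - q‖ ^ 2 / 2 : ℝ) : EReal)
        ≤ ((c⁻¹ * γ : ℝ) : EReal) * g z
          + ((‖c⁻¹ • (ContinuousLinearMap.adjoint W) x - z‖ ^ 2 / 2 : ℝ) : EReal)) :
    -- then `x − W(c⁻¹W*x − q)` is `prox_{γΦ}(x)` for `Φ = g ∘ (c⁻¹W*)` :
    ∀ z : lp (fun _ : I => ℝ) 2,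
      (γ : EReal) * g (c⁻¹ • (ContinuousLinearMap.adjoint W)
            (x - W (c⁻¹ • (ContinuousLinearMap.adjoint W) x - q)))
          + ((‖x - (x - W (c⁻¹ • (ContinuousLinearMap.adjoint W) x - q))‖ ^ 2 / 2 : ℝ) : EReal)
        ≤ (γ : EReal) * g (c⁻¹ • (ContinuousLinearMap.adjoint W) z)
          + ((‖x - z‖ ^ 2 / 2 : ℝ) : EReal) := by
  intro z
  have hW : IsTightFrame W c := htight
  set u := c⁻¹ • adjoint W x - q
  have hproj : c⁻¹ • adjoint W (x - W u) = q := by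
    rw [hW.smul_adjoint_apply_sub_apply hc.ne', sub_sub_cancel]
  have hscaled := EReal.coe_mul_mul_add_coe_le_of_le hc.le (hq (c⁻¹ • adjoint W z))
  rw [mul_inv_cancel_left₀ hc.ne'] at hscaled
  rw [hproj, sub_sub_cancel, hW.norm_sq_apply]
  calc (γ : EReal) * g q + ((c * ‖u‖ ^ 2 / 2 : ℝ) : EReal)
      = γ * g q + ((c * (‖u‖ ^ 2 / 2) : ℝ) : EReal) := by rw [mul_div_assoc]
    _ ≤ γ * g (c⁻¹ • adjoint W z)
          + ((c * (‖c⁻¹ • adjoint W x - c⁻¹ • adjoint W z‖ ^ 2 / 2) : ℝ) : EReal) := hscaled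
    _ ≤ γ * g (c⁻¹ • adjoint W z) + ((‖x - z‖ ^ 2 / 2 : ℝ) : EReal) := by
      gcongr
      rw [← smul_sub, ← map_sub, ← mul_div_assoc]
      gcongr
      exact hW.mul_norm_sq_smul_adjoint_apply_le hc.le (x - z)

/-- Proximity operator of the pre-composition of a convex function with the
pseudo-inverse `c⁻¹W*` of a tight-frame analysis operator `W` (with `W*W = c·Id`):
`prox_{γΦ}(x) = x − W((Id − prox_{c⁻¹γ g})(c⁻¹W*x))` where `Φ = g ∘ (c⁻¹W*)` on `ℓ²(I)`. -/
theorem prox_tight_frame_composition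
    {I : Type*} [Countable I] {H : Type*}
    [NormedAddCommGroup H] [InnerProductSpace ℝ H] [CompleteSpace H]
    (W : H →L[ℝ] lp (fun _ : I => ℝ) 2) (c : ℝ) (hc : 0 < c)
    (htight : (ContinuousLinearMap.adjoint W) ∘L W = c • ContinuousLinearMap.id ℝ H)
    (g : H → EReal)
    (hproper_bot : ∀ z, g z ≠ ⊥) (hproper_top : ∃ z, g z ≠ ⊤)
    (hlsc : LowerSemicontinuous g)
    (hconvex : ∀ x y : H, ∀ a b : ℝ, 0 ≤ a → 0 ≤ b → a + b = 1 →
      g (a • x + b • y) ≤ (a : EReal) * g x + (b : EReal) * g y)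
    (γ : ℝ) (hγ : 0 < γ) (x : lp (fun _ : I => ℝ) 2) (q : H)
    -- `q = prox_{c⁻¹γ g}(c⁻¹ W* x)` :
    (hq : ∀ z : H,
      ((c⁻¹ * γ : ℝ) : EReal) * g q
          + ((‖c⁻¹ • (ContinuousLinearMap.adjoint W) x - q‖ ^ 2 / 2 : ℝ) : EReal)
        ≤ ((c⁻¹ * γ : ℝ) : EReal) * g z
          + ((‖c⁻¹ • (ContinuousLinearMap.adjoint W) x - z‖ ^ 2 / 2 : ℝ) : EReal)) :
    -- then `x − W(c⁻¹W*x − q)` is `prox_{γΦ}(x)` for `Φ = g ∘ (c⁻¹W*)` :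
    ∀ z : lp (fun _ : I => ℝ) 2,
      (γ : EReal) * g (c⁻¹ • (ContinuousLinearMap.adjoint W)
            (x - W (c⁻¹ • (ContinuousLinearMap.adjoint W) x - q)))
          + ((‖x - (x - W (c⁻¹ • (ContinuousLinearMap.adjoint W) x - q))‖ ^ 2 / 2 : ℝ) : EReal)
        ≤ (γ : EReal) * g (c⁻¹ • (ContinuousLinearMap.adjoint W) z)
          + ((‖x - z‖ ^ 2 / 2 : ℝ) : EReal) :=
  prox_tight_frame_composition_general W c hc htight g γ x q hq
end

section
/- On the space of m×n real matrices (discrete images) with the discrete gradient ∇̈ defined by forward differences with Neumann boundary conditions, and Div = −∇̈* its negative adjoint, the operator norm of Div (equivalently of ∇̈) satisfies ‖Div‖² ≤ 8. -/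
/-!
Split `‖∇̈u‖²` into its vertical and horizontal parts; each is a sum over columns (resp. rows)
of one-dimensional Neumann forward differences. In one dimension the difference at the last
index vanishes, and `(a - b)² ≤ 2a² + 2b²` bounds each remaining term, so the sum is at most
`2‖v‖² + 2‖v‖² = 4‖v‖²`. The two parts together give the constant `8`.
-/

open Finset

section AddGroup

variable {R : Type*} [AddGroup R]

def neumannFwdDiff {m : ℕ} (v : Fin m → R) (i : Fin m) : R :=
  (if h : (i : ℕ) + 1 < m then v ⟨(i : ℕ) + 1, h⟩ else v i) - v i

lemma neumannFwdDiff_castSucc {k : ℕ} (v : Fin (k + 1) → R) (i : Fin k) :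
    neumannFwdDiff v i.castSucc = v i.succ - v i.castSucc := by
  simp [neumannFwdDiff, Fin.succ]

lemma neumannFwdDiff_last {k : ℕ} (v : Fin (k + 1) → R) :
    neumannFwdDiff v (Fin.last k) = 0 := by
  simp [neumannFwdDiff]

end AddGroup

variable {R : Type*} [CommRing R] [LinearOrder R] [IsStrictOrderedRing R]

lemma sub_sq_le (a b : R) : (a - b) ^ 2 ≤ 2 * (a ^ 2 + b ^ 2) := by
  simpa [sub_eq_add_neg] using add_sq_le (a := a) (b := -b)

lemma sum_sq_succ_le {k : ℕ} (v : Fin (k + 1) → R) :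
    ∑ i : Fin k, v i.succ ^ 2 ≤ ∑ i, v i ^ 2 := by
  rw [Fin.sum_univ_succ]
  exact le_add_of_nonneg_left (sq_nonneg _)

lemma sum_sq_castSucc_le {k : ℕ} (v : Fin (k + 1) → R) :
    ∑ i : Fin k, v i.castSucc ^ 2 ≤ ∑ i, v i ^ 2 := by
  rw [Fin.sum_univ_castSucc]
  exact le_add_of_nonneg_right (sq_nonneg _)

lemma sum_sq_neumannFwdDiff_le {m : ℕ} (v : Fin m → R) :
    ∑ i, neumannFwdDiff v i ^ 2 ≤ 4 * ∑ i, v i ^ 2 := by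
  cases m with
  | zero => simp
  | succ k =>
    rw [Fin.sum_univ_castSucc, neumannFwdDiff_last]
    calc ∑ i : Fin k, neumannFwdDiff v i.castSucc ^ 2 + 0 ^ 2
        = ∑ i : Fin k, (v i.succ - v i.castSucc) ^ 2 := by
          simp only [neumannFwdDiff_castSucc]; ring
      _ ≤ ∑ i : Fin k, 2 * (v i.succ ^ 2 + v i.castSucc ^ 2) :=
          sum_le_sum fun i _ => sub_sq_le _ _
      _ = 2 * (∑ i : Fin k, v i.succ ^ 2 + ∑ i : Fin k, v i.castSucc ^ 2) := by
          rw [← mul_sum, sum_add_distrib]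
      _ ≤ 4 * ∑ i, v i ^ 2 := by
          linarith [sum_sq_succ_le v, sum_sq_castSucc_le v]

/-- The squared operator norm of the discrete gradient (equivalently, of the
discrete divergence, its negative adjoint) with forward differences and Neumann
boundary conditions is at most 8: `‖∇̈u‖² ≤ 8‖u‖²` for every `m×n` image `u`. -/
theorem discrete_gradient_norm_sq_le_eight
    (m n : ℕ) (u : Fin m → Fin n → ℝ) :
    (∑ i : Fin m, ∑ j : Fin n,
        (((if hi : (i : ℕ) + 1 < m then u ⟨(i : ℕ) + 1, hi⟩ j else u i j) - u i j) ^ 2 +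
         ((if hj : (j : ℕ) + 1 < n then u i ⟨(j : ℕ) + 1, hj⟩ else u i j) - u i j) ^ 2))
      ≤ 8 * ∑ i : Fin m, ∑ j : Fin n, (u i j) ^ 2 := by
  change ∑ i : Fin m, ∑ j : Fin n,
      (neumannFwdDiff (u · j) i ^ 2 + neumannFwdDiff (u i) j ^ 2) ≤ _
  have vertical : ∑ j : Fin n, ∑ i : Fin m, neumannFwdDiff (u · j) i ^ 2 ≤
      4 * ∑ i, ∑ j, u i j ^ 2 := by
    rw [sum_comm (f := fun i j => u i j ^ 2), mul_sum]
    exact sum_le_sum fun j _ => sum_sq_neumannFwdDiff_le (u · j)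
  have horizontal : ∑ i, ∑ j, neumannFwdDiff (u i) j ^ 2 ≤ 4 * ∑ i, ∑ j, u i j ^ 2 := by
    rw [mul_sum]
    exact sum_le_sum fun i _ => sum_sq_neumannFwdDiff_le (u i)
  simp only [sum_add_distrib]
  rw [sum_comm (γ := Fin m)]
  linarith
end

section
/- Let F = Ψ + Φ where Ψ, Φ are proper lsc convex functions on a Hilbert space such that F has a minimizer. Let γ > 0 and μ_t ∈ (0,2) with Σ_t μ_t(2−μ_t) = +∞. Then the Douglas–Rachford iteration x^{t+1} = (1 − μ_t/2) x^t + (μ_t/2)(2·prox_{γΨ} − Id)∘(2·prox_{γΦ} − Id)(x^t) converges weakly to some point x̂, and prox_{γΦ}(x̂) is a minimizer of F. -/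
/-!
Reflections `R = 2 • prox - id` through proximity operators are nonexpansive, since the
subdifferential is monotone; hence so is the Douglas–Rachford operator `T = R_Ψ ∘ R_Φ`. If `y` is a
fixed point of `T`, the subgradients `±γ⁻¹ • (y - prox_{γΦ} y)` of `Ψ` and `Φ` at `prox_{γΦ} y`
add up to `0`; conversely the qualification condition splits `0 ∈ ∂(Ψ + Φ)` at a minimizer into
such a pair, which produces a fixed point. The iteration is the Krasnosel'skiĭ–Mann scheme
`x ↦ (1 - μ/2) x + (μ/2) T x`: every step decreases `‖x - y‖²` for each fixed point `y` by at least
`μ(2 - μ)/4 ‖x - T x‖²`, so the divergence of `∑ μₜ(2 - μₜ)` forces the (monotone) residual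
to `0`. By demiclosedness every weak cluster point is then a fixed point, and Opial's argument
gives weak convergence.
-/

open scoped RealInnerProductSpace
open Filter Topology Function

section WeakConvergence

variable {H : Type*} [NormedAddCommGroup H] [InnerProductSpace ℝ H] {ι : Type*}

def TendstoWeakly (x : ι → H) (l : Filter ι) (w : H) : Prop :=
  ∀ v, Tendsto (fun t => ⟪x t, v⟫) l (𝓝 ⟪w, v⟫)

theorem exists_tendstoWeakly_of_norm_le [CompleteSpace H] {x : ι → H} {M : ℝ}
    (hx : ∀ t, ‖x t‖ ≤ M) (U : Ultrafilter ι) : ∃ w, TendstoWeakly x (U : Filter ι) w := by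
  have hbound : ∀ v t, |⟪x t, v⟫| ≤ M * ‖v‖ := fun v t =>
    (abs_real_inner_le_norm _ _).trans (by gcongr; exact hx t)
  have hlim : ∀ v, ∃ c, Tendsto (fun t => ⟪x t, v⟫) U (𝓝 c) := fun v => by
    obtain ⟨c, -, hc⟩ := (isCompact_Icc (a := -(M * ‖v‖)) (b := M * ‖v‖)).ultrafilter_le_nhds
      (U.map fun t => ⟪x t, v⟫)
      (le_principal_iff.mpr <| mem_map.mpr <| univ_mem' fun t => abs_le.mp (hbound v t))
    exact ⟨c, hc⟩
  choose c hc using hlim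
  let f : H →ₗ[ℝ] ℝ :=
    { toFun := c
      map_add' := fun v v' => tendsto_nhds_unique (hc (v + v')) <| by
        simpa only [inner_add_right] using (hc v).add (hc v')
      map_smul' := fun r v => tendsto_nhds_unique (hc (r • v)) <| by
        simpa only [real_inner_smul_right, RingHom.id_apply, smul_eq_mul]
          using (hc v).const_mul r }
  have hf : ∀ v, ‖f v‖ ≤ M * ‖v‖ := fun v =>
    le_of_tendsto (hc v).norm (Eventually.of_forall fun t => hbound v t)
  refine ⟨(InnerProductSpace.toDual ℝ H).symm (f.mkContinuous M hf), fun v => ?_⟩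
  rw [InnerProductSpace.toDual_symm_apply]
  exact hc v

theorem TendstoWeakly.inner_sub_tendsto_zero {x : ι → H} {l : Filter ι} {w : H}
    (hw : TendstoWeakly x l w) (v : H) : Tendsto (fun t => ⟪x t - w, v⟫) l (𝓝 0) := by
  simpa only [inner_sub_left, sub_self] using (hw v).sub_const ⟪w, v⟫

theorem TendstoWeakly.eq_of_tendsto_norm_sub {x : ℕ → H} {U U' : Ultrafilter ℕ} {w w' : H}
    (hU : (U : Filter ℕ) ≤ atTop) (hU' : (U' : Filter ℕ) ≤ atTop)
    (hw : TendstoWeakly x (U : Filter ℕ) w) (hw' : TendstoWeakly x (U' : Filter ℕ) w')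
    {d d' : ℝ} (hd : Tendsto (fun t => ‖x t - w‖) atTop (𝓝 d))
    (hd' : Tendsto (fun t => ‖x t - w'‖) atTop (𝓝 d')) : w = w' := by
  have hpol : ∀ t, ⟪x t, w - w'⟫ = (‖x t - w'‖ ^ 2 - ‖x t - w‖ ^ 2 + ‖w‖ ^ 2 - ‖w'‖ ^ 2) / 2 := by
    intro t
    rw [norm_sub_sq_real, norm_sub_sq_real, inner_sub_right]
    ring
  have hc : Tendsto (fun t => ⟪x t, w - w'⟫) atTop
      (𝓝 ((d' ^ 2 - d ^ 2 + ‖w‖ ^ 2 - ‖w'‖ ^ 2) / 2)) := by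
    simp only [hpol]
    exact ((((hd'.pow 2).sub (hd.pow 2)).add_const _).sub_const _).div_const 2
  have h₁ := tendsto_nhds_unique (hw (w - w')) (hc.mono_left hU)
  have h₂ := tendsto_nhds_unique (hw' (w - w')) (hc.mono_left hU')
  rw [← sub_eq_zero, ← inner_self_eq_zero (𝕜 := ℝ), inner_sub_left, h₁, h₂, sub_self]

/-- Opial's lemma. -/
theorem exists_tendstoWeakly_of_tendsto_norm_sub [CompleteSpace H] {x : ℕ → H} {S : Set H}
    {M : ℝ} (hx : ∀ t, ‖x t‖ ≤ M)
    (hdist : ∀ y ∈ S, ∃ d, Tendsto (fun t => ‖x t - y‖) atTop (𝓝 d))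
    (hcluster : ∀ (U : Ultrafilter ℕ) w, (U : Filter ℕ) ≤ atTop →
      TendstoWeakly x (U : Filter ℕ) w → w ∈ S) :
    ∃ w ∈ S, TendstoWeakly x atTop w := by
  obtain ⟨w, hw⟩ := exists_tendstoWeakly_of_norm_le hx (Ultrafilter.of atTop)
  have hwS := hcluster _ w (Ultrafilter.of_le _) hw
  refine ⟨w, hwS, fun v => (tendsto_iff_ultrafilter _ _ _).mpr fun U hU => ?_⟩
  obtain ⟨w', hw'⟩ := exists_tendstoWeakly_of_norm_le hx U
  obtain ⟨d, hd⟩ := hdist w hwS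
  obtain ⟨d', hd'⟩ := hdist w' (hcluster U w' hU hw')
  rw [hw.eq_of_tendsto_norm_sub (Ultrafilter.of_le _) hU hw' hd hd']
  exact hw' v

end WeakConvergence

section Nonexpansive

variable {H : Type*} [NormedAddCommGroup H] [InnerProductSpace ℝ H] {T : H → H}

/-- Demiclosedness of `Id - T` at `0`. -/
theorem LipschitzWith.isFixedPt_of_tendstoWeakly {ι : Type*} (hT : LipschitzWith 1 T)
    {l : Filter ι} [l.NeBot] {x : ι → H} {w : H} {M : ℝ} (hx : ∀ t, ‖x t‖ ≤ M)
    (hw : TendstoWeakly x l w) (hres : Tendsto (fun t => ‖x t - T (x t)‖) l (𝓝 0)) :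
    IsFixedPt T w := by
  set r := fun t => ‖x t - T (x t)‖
  have hkey : ∀ t, ‖w - T w‖ ^ 2 + 2 * ⟪x t - w, w - T w⟫ ≤ r t * (r t + 2 * (M + ‖w‖)) := by
    intro t
    have hdist : ‖x t - w‖ ≤ M + ‖w‖ := (_root_.norm_sub_le _ _).trans (by linarith [hx t])
    have hTw : ‖x t - T w‖ ≤ r t + ‖x t - w‖ := calc
      ‖x t - T w‖ = ‖(x t - T (x t)) + (T (x t) - T w)‖ := by rw [sub_add_sub_cancel]
      _ ≤ r t + ‖T (x t) - T w‖ := norm_add_le _ _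
      _ ≤ r t + ‖x t - w‖ := by simpa using hT.norm_sub_le (x t) w
    have hexp : ‖x t - T w‖ ^ 2 = ‖x t - w‖ ^ 2 + 2 * ⟪x t - w, w - T w⟫ + ‖w - T w‖ ^ 2 := by
      rw [← norm_add_sq_real, sub_add_sub_cancel]
    have hr : 0 ≤ r t := norm_nonneg _
    nlinarith [pow_le_pow_left₀ (norm_nonneg _) hTw 2]
  have hlhs := ((hw.inner_sub_tendsto_zero (w - T w)).const_mul 2).const_add (‖w - T w‖ ^ 2)
  have hrhs := hres.mul (hres.add_const (2 * (M + ‖w‖)))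
  simp only [mul_zero, add_zero, zero_mul] at hlhs hrhs
  have hsq : ‖w - T w‖ ^ 2 ≤ 0 := le_of_tendsto_of_tendsto' hlhs hrhs hkey
  simpa [sub_eq_zero, eq_comm, IsFixedPt] using hsq

theorem norm_one_sub_smul_add_smul_sq (u v : H) (a : ℝ) :
    ‖(1 - a) • u + a • v‖ ^ 2 = (1 - a) * ‖u‖ ^ 2 + a * ‖v‖ ^ 2 - a * (1 - a) * ‖u - v‖ ^ 2 := by
  rw [norm_add_sq_real, norm_sub_sq_real, norm_smul, norm_smul, real_inner_smul_left,
    real_inner_smul_right, mul_pow, mul_pow, Real.norm_eq_abs, Real.norm_eq_abs, sq_abs, sq_abs]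
  ring

theorem LipschitzWith.norm_averaged_sub_sq_add_le (hT : LipschitzWith 1 T) {y : H}
    (hy : IsFixedPt T y) {a : ℝ} (ha : a ∈ Set.Icc (0 : ℝ) 1) (u : H) :
    ‖(1 - a) • u + a • T u - y‖ ^ 2 + a * (1 - a) * ‖u - T u‖ ^ 2 ≤ ‖u - y‖ ^ 2 := by
  have hTu : ‖T u - y‖ ≤ ‖u - y‖ := by simpa [hy.eq] using hT.norm_sub_le u y
  have hsplit : (1 - a) • u + a • T u - y = (1 - a) • (u - y) + a • (T u - y) := by module
  rw [hsplit, norm_one_sub_smul_add_smul_sq, sub_sub_sub_cancel_right]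
  nlinarith [ha.1, pow_le_pow_left₀ (norm_nonneg _) hTu 2]

theorem LipschitzWith.norm_averaged_sub_apply_le (hT : LipschitzWith 1 T) {a : ℝ}
    (ha : a ∈ Set.Icc (0 : ℝ) 1) (u : H) :
    ‖(1 - a) • u + a • T u - T ((1 - a) • u + a • T u)‖ ≤ ‖u - T u‖ := by
  set v := (1 - a) • u + a • T u
  have hvu : v - T u = (1 - a) • (u - T u) := by module
  have huv : u - v = a • (u - T u) := by module
  calc ‖v - T v‖ = ‖(v - T u) + (T u - T v)‖ := by rw [sub_add_sub_cancel]
    _ ≤ ‖v - T u‖ + ‖u - v‖ := (norm_add_le _ _).trans (by simpa using hT.norm_sub_le u v)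
    _ = ‖u - T u‖ := by
      rw [hvu, huv, norm_smul, norm_smul, Real.norm_of_nonneg ha.1,
        Real.norm_of_nonneg (sub_nonneg.mpr ha.2)]
      ring

end Nonexpansive

theorem tendsto_zero_of_antitone_of_sum_mul_le {a r : ℕ → ℝ} {C : ℝ} (ha : ∀ t, 0 ≤ a t)
    (ha_sum : ¬ Summable a) (hr : Antitone r) (hr₀ : ∀ t, 0 ≤ r t)
    (hC : ∀ n, ∑ t ∈ Finset.range n, a t * r t ≤ C) : Tendsto r atTop (𝓝 0) := by
  have hbdd : BddBelow (Set.range r) := ⟨0, Set.forall_mem_range.mpr hr₀⟩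
  have hlim := tendsto_atTop_ciInf hr hbdd
  obtain hρ | hρ := (le_ciInf hr₀).eq_or_lt
  · rwa [← hρ] at hlim
  refine absurd (summable_of_sum_range_le (c := C / ⨅ t, r t) ha fun n => ?_) ha_sum
  calc ∑ t ∈ Finset.range n, a t
      ≤ ∑ t ∈ Finset.range n, a t * r t / ⨅ t, r t := Finset.sum_le_sum fun t _ => by
        rw [le_div_iff₀ hρ]
        exact mul_le_mul_of_nonneg_left (ciInf_le hbdd t) (ha t)
    _ ≤ C / ⨅ t, r t := by
        rw [← Finset.sum_div]
        exact div_le_div_of_nonneg_right (hC n) hρ.le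

section KrasnoselskiiMann

variable {H : Type*} [NormedAddCommGroup H] [InnerProductSpace ℝ H] {T : H → H}
  {μ : ℕ → ℝ} {x : ℕ → H}

theorem LipschitzWith.krasnoselskiiMann_fejer (hT : LipschitzWith 1 T)
    (hμ : ∀ t, μ t ∈ Set.Icc 0 2)
    (hx : ∀ t, x (t + 1) = (1 - μ t / 2) • x t + (μ t / 2) • T (x t)) {y : H}
    (hy : IsFixedPt T y) (t : ℕ) :
    ‖x (t + 1) - y‖ ^ 2 + μ t * (2 - μ t) / 4 * ‖x t - T (x t)‖ ^ 2 ≤ ‖x t - y‖ ^ 2 := by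
  have ha : μ t / 2 ∈ Set.Icc (0 : ℝ) 1 := ⟨by linarith [(hμ t).1], by linarith [(hμ t).2]⟩
  convert hT.norm_averaged_sub_sq_add_le hy ha (x t) using 3
  · rw [hx]
  · ring

theorem LipschitzWith.krasnoselskiiMann_residual_antitone (hT : LipschitzWith 1 T)
    (hμ : ∀ t, μ t ∈ Set.Icc 0 2)
    (hx : ∀ t, x (t + 1) = (1 - μ t / 2) • x t + (μ t / 2) • T (x t)) :
    Antitone fun t => ‖x t - T (x t)‖ := by
  refine antitone_nat_of_succ_le fun t => ?_
  have ha : μ t / 2 ∈ Set.Icc (0 : ℝ) 1 := ⟨by linarith [(hμ t).1], by linarith [(hμ t).2]⟩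
  rw [hx]
  exact hT.norm_averaged_sub_apply_le ha (x t)

theorem krasnoselskiiMann_tendstoWeakly [CompleteSpace H] (hT : LipschitzWith 1 T)
    (hfix : ∃ y, IsFixedPt T y) (hμ : ∀ t, μ t ∈ Set.Icc 0 2)
    (hμ_sum : ¬ Summable fun t => μ t * (2 - μ t))
    (hx : ∀ t, x (t + 1) = (1 - μ t / 2) • x t + (μ t / 2) • T (x t)) :
    ∃ w, IsFixedPt T w ∧ TendstoWeakly x atTop w := by
  obtain ⟨y₀, hy₀⟩ := hfix
  have hweight : ∀ t, 0 ≤ μ t * (2 - μ t) / 4 := fun t =>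
    div_nonneg (mul_nonneg (hμ t).1 (sub_nonneg.mpr (hμ t).2)) zero_le_four
  have hdist_anti : ∀ y, IsFixedPt T y → Antitone fun t => ‖x t - y‖ := fun y hy =>
    antitone_nat_of_succ_le fun t => le_of_pow_le_pow_left₀ two_ne_zero (norm_nonneg _) <|
      (le_add_of_nonneg_right (mul_nonneg (hweight t) (sq_nonneg _))).trans
        (hT.krasnoselskiiMann_fejer hμ hx hy t)
  have hbound : ∀ t, ‖x t‖ ≤ ‖x 0 - y₀‖ + ‖y₀‖ := fun t => calc
    ‖x t‖ ≤ ‖x t - y₀‖ + ‖y₀‖ := norm_le_norm_sub_add _ _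
    _ ≤ ‖x 0 - y₀‖ + ‖y₀‖ := by gcongr; exact hdist_anti y₀ hy₀ (Nat.zero_le t)
  -- The Fejér inequalities telescope, so the weighted squared residuals have bounded partial sums.
  have hres_sq : Tendsto (fun t => ‖x t - T (x t)‖ ^ 2) atTop (𝓝 0) := by
    refine tendsto_zero_of_antitone_of_sum_mul_le hweight
      (fun h => hμ_sum ((summable_div_const_iff four_ne_zero).mp h))
      (fun s t hst => pow_le_pow_left₀ (norm_nonneg _)
        (hT.krasnoselskiiMann_residual_antitone hμ hx hst) 2)
      (fun t => sq_nonneg _) (C := ‖x 0 - y₀‖ ^ 2) fun n => ?_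
    calc _ ≤ ∑ t ∈ Finset.range n, (‖x t - y₀‖ ^ 2 - ‖x (t + 1) - y₀‖ ^ 2) :=
          Finset.sum_le_sum fun t _ => by linarith [hT.krasnoselskiiMann_fejer hμ hx hy₀ t]
      _ ≤ ‖x 0 - y₀‖ ^ 2 := by
          rw [Finset.sum_range_sub' (fun t => ‖x t - y₀‖ ^ 2)]
          linarith [sq_nonneg ‖x n - y₀‖]
  have hres : Tendsto (fun t => ‖x t - T (x t)‖) atTop (𝓝 0) := by
    simpa [Real.sqrt_sq (norm_nonneg _)] using hres_sq.sqrt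
  refine exists_tendstoWeakly_of_tendsto_norm_sub hbound
    (fun y hy => ⟨_, tendsto_atTop_ciInf (hdist_anti y hy) ⟨0, Set.forall_mem_range.mpr
      fun t => norm_nonneg _⟩⟩)
    fun U w hU hw => hT.isFixedPt_of_tendstoWeakly hbound hw (hres.mono_left hU)

end KrasnoselskiiMann

section Subgradient

variable {H : Type*} [NormedAddCommGroup H] [InnerProductSpace ℝ H]

def HasSubgradientAt (Φ : H → EReal) (v p : H) : Prop :=
  ∀ z, Φ p + ((⟪v, z - p⟫ : ℝ) : EReal) ≤ Φ z

variable {Ψ Φ : H → EReal} {v w p : H}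

theorem hasSubgradientAt_zero_iff : HasSubgradientAt Φ 0 p ↔ ∀ z, Φ p ≤ Φ z := by
  simp [HasSubgradientAt]

theorem HasSubgradientAt.add (hΨ : HasSubgradientAt Ψ v p) (hΦ : HasSubgradientAt Φ w p) :
    HasSubgradientAt (Ψ + Φ) (v + w) p := fun z => by
  rw [inner_add_left, EReal.coe_add, Pi.add_apply, Pi.add_apply, add_add_add_comm]
  exact add_le_add (hΨ z) (hΦ z)

theorem HasSubgradientAt.ne_top (h : HasSubgradientAt Φ v p) {z : H} (hz : Φ z ≠ ⊤) :
    Φ p ≠ ⊤ := fun hp => hz <| top_le_iff.mp <| by simpa [hp] using h z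

theorem HasSubgradientAt.inner_sub_nonneg (hΦ_bot : ∀ z, Φ z ≠ ⊥) {v' p' : H}
    (h : HasSubgradientAt Φ v p) (h' : HasSubgradientAt Φ v' p') (hp : Φ p ≠ ⊤) :
    0 ≤ ⟪v - v', p - p'⟫ := by
  have hp' := h'.ne_top hp
  have h₁ := h p'
  have h₂ := h' p
  rw [← EReal.coe_toReal hp (hΦ_bot p), ← EReal.coe_toReal hp' (hΦ_bot p')] at h₁ h₂
  norm_cast at h₁ h₂
  have hswap : ⟪v, p - p'⟫ = -⟪v, p' - p⟫ := by rw [← inner_neg_right, neg_sub]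
  rw [inner_sub_left, hswap]
  linarith

end Subgradient

section Prox

variable {H : Type*} [NormedAddCommGroup H]

def IsProx (γ : ℝ) (Φ : H → EReal) (P : H → H) : Prop :=
  ∀ x z : H, (γ : EReal) * Φ (P x) + ((‖x - P x‖ ^ 2 / 2 : ℝ) : EReal)
    ≤ (γ : EReal) * Φ z + ((‖x - z‖ ^ 2 / 2 : ℝ) : EReal)

variable {γ : ℝ} {Φ : H → EReal} {P : H → H}

theorem IsProx.le_of_eq_coe (hP : IsProx γ Φ P) {u z : H} {c c' : ℝ} (hu : Φ (P u) = c)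
    (hz : Φ z = c') : γ * c + ‖u - P u‖ ^ 2 / 2 ≤ γ * c' + ‖u - z‖ ^ 2 / 2 := by
  have h := hP u z
  rw [hu, hz] at h
  exact_mod_cast h

theorem IsProx.apply_ne_top (hP : IsProx γ Φ P) (hγ : 0 < γ) (hΦ_bot : ∀ z, Φ z ≠ ⊥) {z : H}
    (hz : Φ z ≠ ⊤) (u : H) : Φ (P u) ≠ ⊤ := by
  intro hu
  have h := hP u z
  rw [hu, EReal.coe_mul_top_of_pos hγ, EReal.top_add_coe, top_le_iff,
    ← EReal.coe_toReal hz (hΦ_bot z)] at h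
  exact EReal.coe_ne_top _ (by exact_mod_cast h)

variable [InnerProductSpace ℝ H]

/-- Compare the prox value at `P u` with the one at `P u + t • (z - P u)`. -/
theorem IsProx.inner_le_add_mul (hP : IsProx γ Φ P) (hγ : 0 < γ) (hΦ_bot : ∀ z, Φ z ≠ ⊥)
    (hΦ_convex : ∀ x y : H, ∀ a b : ℝ, 0 ≤ a → 0 ≤ b → a + b = 1 →
      Φ (a • x + b • y) ≤ (a : EReal) * Φ x + (b : EReal) * Φ y)
    {u z : H} {c c' : ℝ} (hu : Φ (P u) = c) (hz : Φ z = c') {t : ℝ} (ht : t ∈ Set.Ioc 0 1) :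
    ⟪u - P u, z - P u⟫ ≤ γ * (c' - c) + t * (‖z - P u‖ ^ 2 / 2) := by
  set p := P u
  have hconv := hΦ_convex z p t (1 - t) ht.1.le (sub_nonneg.mpr ht.2) (by ring)
  rw [hz, hu, ← EReal.coe_mul, ← EReal.coe_mul, ← EReal.coe_add] at hconv
  lift Φ (t • z + (1 - t) • p) to ℝ using ⟨ne_top_of_le_ne_top (EReal.coe_ne_top _) hconv,
    hΦ_bot _⟩ with d hd
  have hd_le : d ≤ t * c' + (1 - t) * c := EReal.coe_le_coe_iff.mp hconv
  have hprox := hP.le_of_eq_coe hu hd.symm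
  have hexp : ‖u - (t • z + (1 - t) • p)‖ ^ 2
      = ‖u - p‖ ^ 2 - 2 * (t * ⟪u - p, z - p⟫) + t ^ 2 * ‖z - p‖ ^ 2 := by
    rw [show u - (t • z + (1 - t) • p) = (u - p) - t • (z - p) by module, norm_sub_sq_real,
      real_inner_smul_right, norm_smul, mul_pow, Real.norm_eq_abs, sq_abs]
  rw [hexp] at hprox
  have hscaled : t * ⟪u - p, z - p⟫ ≤ t * (γ * (c' - c) + t * (‖z - p‖ ^ 2 / 2)) := by
    nlinarith [mul_le_mul_of_nonneg_left hd_le hγ.le]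
  exact le_of_mul_le_mul_left hscaled ht.1

theorem IsProx.hasSubgradientAt (hP : IsProx γ Φ P) (hγ : 0 < γ) (hΦ_bot : ∀ z, Φ z ≠ ⊥)
    (hΦ_convex : ∀ x y : H, ∀ a b : ℝ, 0 ≤ a → 0 ≤ b → a + b = 1 →
      Φ (a • x + b • y) ≤ (a : EReal) * Φ x + (b : EReal) * Φ y)
    {z₀ : H} (hz₀ : Φ z₀ ≠ ⊤) (u : H) : HasSubgradientAt Φ (γ⁻¹ • (u - P u)) (P u) := by
  have hu := hP.apply_ne_top hγ hΦ_bot hz₀ u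
  intro z
  by_cases hz : Φ z = ⊤
  · rw [hz]; exact le_top
  lift Φ (P u) to ℝ using ⟨hu, hΦ_bot _⟩ with c hc
  lift Φ z to ℝ using ⟨hz, hΦ_bot _⟩ with c' hc'
  rw [← EReal.coe_add, EReal.coe_le_coe_iff, real_inner_smul_left]
  have hlim : Tendsto (fun t => γ * (c' - c) + t * (‖z - P u‖ ^ 2 / 2)) (𝓝[>] 0)
      (𝓝 (γ * (c' - c))) := by
    refine tendsto_nhdsWithin_of_tendsto_nhds ?_
    simpa using ((continuous_id.mul continuous_const).const_add _).tendsto (0 : ℝ)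
  have hclose : ∀ᶠ t in 𝓝[>] 0,
      ⟪u - P u, z - P u⟫ ≤ γ * (c' - c) + t * (‖z - P u‖ ^ 2 / 2) := by
    filter_upwards [Ioc_mem_nhdsGT zero_lt_one] with t ht
    exact hP.inner_le_add_mul hγ hΦ_bot hΦ_convex hc.symm hc'.symm ht
  have hle := mul_le_mul_of_nonneg_left (ge_of_tendsto hlim hclose) (inv_nonneg.mpr hγ.le)
  rw [inv_mul_cancel_left₀ hγ.ne'] at hle
  linarith

theorem IsProx.eq_of_hasSubgradientAt (hP : IsProx γ Φ P) (hγ : 0 < γ)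
    (hΦ_bot : ∀ z, Φ z ≠ ⊥) {u p : H} (hp : Φ p ≠ ⊤)
    (h : HasSubgradientAt Φ (γ⁻¹ • (u - p)) p) : P u = p := by
  have hsub := h (P u)
  have hprox := hP u p
  lift Φ (P u) to ℝ using ⟨hP.apply_ne_top hγ hΦ_bot hp u, hΦ_bot _⟩ with c' hc'
  lift Φ p to ℝ using ⟨hp, hΦ_bot _⟩ with c hc
  norm_cast at hsub hprox
  rw [real_inner_smul_left] at hsub
  have hexp : ‖u - P u‖ ^ 2 = ‖u - p‖ ^ 2 - 2 * ⟪u - p, P u - p⟫ + ‖P u - p‖ ^ 2 := by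
    rw [← norm_sub_sq_real, sub_sub_sub_cancel_right]
  have hinner : γ * c + ⟪u - p, P u - p⟫ ≤ γ * c' := by
    have := mul_le_mul_of_nonneg_left hsub hγ.le
    rwa [mul_add, mul_inv_cancel_left₀ hγ.ne'] at this
  have hsq : ‖P u - p‖ ^ 2 ≤ 0 := by nlinarith
  simpa [sub_eq_zero] using hsq

theorem IsProx.inner_sub_nonneg (hP : IsProx γ Φ P) (hγ : 0 < γ) (hΦ_bot : ∀ z, Φ z ≠ ⊥)
    (hΦ_convex : ∀ x y : H, ∀ a b : ℝ, 0 ≤ a → 0 ≤ b → a + b = 1 →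
      Φ (a • x + b • y) ≤ (a : EReal) * Φ x + (b : EReal) * Φ y)
    {z : H} (hz : Φ z ≠ ⊤) (u w : H) : 0 ≤ ⟪(u - P u) - (w - P w), P u - P w⟫ := by
  have hsub := hP.hasSubgradientAt hγ hΦ_bot hΦ_convex hz
  have h := (hsub u).inner_sub_nonneg hΦ_bot (hsub w) (hP.apply_ne_top hγ hΦ_bot hz u)
  rw [← smul_sub, real_inner_smul_left] at h
  exact nonneg_of_mul_nonneg_right h (inv_pos.mpr hγ)

end Prox

section DouglasRachford

variable {H : Type*} [NormedAddCommGroup H] [InnerProductSpace ℝ H]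

def reflect (P : H → H) (u : H) : H := (2 : ℝ) • P u - u

theorem lipschitzWith_one_reflect {P : H → H}
    (hP : ∀ u w, 0 ≤ ⟪(u - P u) - (w - P w), P u - P w⟫) : LipschitzWith 1 (reflect P) := by
  refine lipschitzWith_iff_norm_sub_le.mpr fun u w => ?_
  have hid : ‖reflect P u - reflect P w‖ ^ 2
      = ‖u - w‖ ^ 2 - 4 * ⟪(u - P u) - (w - P w), P u - P w⟫ := by
    rw [show reflect P u - reflect P w = (2 : ℝ) • (P u - P w) - (u - w) by
        simp only [reflect]; module,
      show (u - P u) - (w - P w) = (u - w) - (P u - P w) by abel]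
    generalize P u - P w = b
    generalize u - w = a
    rw [norm_sub_sq_real, norm_smul, real_inner_smul_left, inner_sub_left,
      real_inner_self_eq_norm_sq, real_inner_comm a b]
    norm_num
    ring
  rw [NNReal.coe_one, one_mul]
  exact le_of_pow_le_pow_left₀ two_ne_zero (norm_nonneg _) (by linarith [hP u w])

variable {γ : ℝ} {Ψ Φ : H → EReal} {PΨ PΦ : H → H}

theorem isFixedPt_reflect_comp_of_hasSubgradientAt (hPΨ : IsProx γ Ψ PΨ)
    (hPΦ : IsProx γ Φ PΦ) (hγ : 0 < γ) (hΨ_bot : ∀ z, Ψ z ≠ ⊥) (hΦ_bot : ∀ z, Φ z ≠ ⊥)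
    {p v : H} (hΨ : HasSubgradientAt Ψ (-v) p) (hΦ : HasSubgradientAt Φ v p) (hΨp : Ψ p ≠ ⊤)
    (hΦp : Φ p ≠ ⊤) : IsFixedPt (reflect PΨ ∘ reflect PΦ) (p + γ • v) := by
  have hΦ_prox : PΦ (p + γ • v) = p := by
    refine hPΦ.eq_of_hasSubgradientAt hγ hΦ_bot hΦp ?_
    rwa [add_sub_cancel_left, smul_smul, inv_mul_cancel₀ hγ.ne', one_smul]
  have hΨ_prox : PΨ (reflect PΦ (p + γ • v)) = p := by
    refine hPΨ.eq_of_hasSubgradientAt hγ hΨ_bot hΨp ?_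
    rwa [reflect, hΦ_prox, show (2 : ℝ) • p - (p + γ • v) - p = γ • -v by module, smul_smul,
      inv_mul_cancel₀ hγ.ne', one_smul]
  change (2 : ℝ) • PΨ (reflect PΦ (p + γ • v)) - reflect PΦ (p + γ • v) = p + γ • v
  rw [hΨ_prox, reflect, hΦ_prox]
  module

theorem hasSubgradientAt_zero_add_of_isFixedPt
    (hsubΨ : ∀ u, HasSubgradientAt Ψ (γ⁻¹ • (u - PΨ u)) (PΨ u))
    (hsubΦ : ∀ u, HasSubgradientAt Φ (γ⁻¹ • (u - PΦ u)) (PΦ u)) {y : H}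
    (hy : IsFixedPt (reflect PΨ ∘ reflect PΦ) y) : HasSubgradientAt (Ψ + Φ) 0 (PΦ y) := by
  have hΨ_prox : PΨ (reflect PΦ y) = PΦ y := by
    have hy' : (2 : ℝ) • PΨ (reflect PΦ y) - reflect PΦ y = y := hy
    rw [sub_eq_iff_eq_add] at hy'
    refine smul_right_injective H (two_ne_zero : (2 : ℝ) ≠ 0) ?_
    change (2 : ℝ) • PΨ (reflect PΦ y) = (2 : ℝ) • PΦ y
    rw [hy', reflect]
    module
  have hΨ := hsubΨ (reflect PΦ y)
  rw [hΨ_prox, show reflect PΦ y - PΦ y = -(y - PΦ y) by simp only [reflect]; module,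
    smul_neg] at hΨ
  simpa using hΨ.add (hsubΦ y)

end DouglasRachford

theorem douglas_rachford_weak_convergence_general
    {H : Type*} [NormedAddCommGroup H] [InnerProductSpace ℝ H] [CompleteSpace H]
    (Ψ Φ : H → EReal)
    (hΨ_bot : ∀ z, Ψ z ≠ ⊥) (hΨ_top : ∃ z, Ψ z ≠ ⊤)
    (hΦ_bot : ∀ z, Φ z ≠ ⊥) (hΦ_top : ∃ z, Φ z ≠ ⊤)
    (hΨ_convex : ∀ x y : H, ∀ a b : ℝ, 0 ≤ a → 0 ≤ b → a + b = 1 →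
      Ψ (a • x + b • y) ≤ (a : EReal) * Ψ x + (b : EReal) * Ψ y)
    (hΦ_convex : ∀ x y : H, ∀ a b : ℝ, 0 ≤ a → 0 ≤ b → a + b = 1 →
      Φ (a • x + b • y) ≤ (a : EReal) * Φ x + (b : EReal) * Φ y)
    -- qualification condition: `∂(Ψ+Φ) = ∂Ψ + ∂Φ`
    (hqual : ∀ p v : H,
      (∀ z : H, (Ψ p + Φ p) + ((⟪v, z - p⟫ : ℝ) : EReal) ≤ Ψ z + Φ z)
        ↔ ∃ v₁ v₂ : H, v = v₁ + v₂ ∧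
            (∀ z : H, Ψ p + ((⟪v₁, z - p⟫ : ℝ) : EReal) ≤ Ψ z) ∧
            (∀ z : H, Φ p + ((⟪v₂, z - p⟫ : ℝ) : EReal) ≤ Φ z))
    -- `F = Ψ + Φ` has a minimizer
    (hmin : ∃ xs : H, ∀ z : H, Ψ xs + Φ xs ≤ Ψ z + Φ z)
    (γ : ℝ) (hγ : 0 < γ)
    -- the proximity operators of `γΨ` and `γΦ`
    (proxΨ proxΦ : H → H)
    (hproxΨ : ∀ x z : H, (γ : EReal) * Ψ (proxΨ x) + ((‖x - proxΨ x‖ ^ 2 / 2 : ℝ) : EReal)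
        ≤ (γ : EReal) * Ψ z + ((‖x - z‖ ^ 2 / 2 : ℝ) : EReal))
    (hproxΦ : ∀ x z : H, (γ : EReal) * Φ (proxΦ x) + ((‖x - proxΦ x‖ ^ 2 / 2 : ℝ) : EReal)
        ≤ (γ : EReal) * Φ z + ((‖x - z‖ ^ 2 / 2 : ℝ) : EReal))
    (μ : ℕ → ℝ) (hμ : ∀ t, μ t ∈ Set.Ioo (0 : ℝ) 2)
    (hμ_sum : ∑' t, ENNReal.ofReal (μ t * (2 - μ t)) = ⊤)
    (x : ℕ → H)
    (hrec : ∀ t : ℕ, x (t + 1) = (1 - μ t / 2) • x t + (μ t / 2) •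
      ((2 : ℝ) • proxΨ ((2 : ℝ) • proxΦ (x t) - x t) - ((2 : ℝ) • proxΦ (x t) - x t))) :
    ∃ xhat : H,
      (∀ v : H, Filter.Tendsto (fun t => (⟪x t, v⟫ : ℝ)) Filter.atTop (nhds ⟪xhat, v⟫)) ∧
      (∀ z : H, Ψ (proxΦ xhat) + Φ (proxΦ xhat) ≤ Ψ z + Φ z) := by
  obtain ⟨zΨ, hzΨ⟩ := hΨ_top
  obtain ⟨zΦ, hzΦ⟩ := hΦ_top
  have hPΨ : IsProx γ Ψ proxΨ := hproxΨ
  have hPΦ : IsProx γ Φ proxΦ := hproxΦ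
  have hsplit : ∀ p v, HasSubgradientAt (Ψ + Φ) v p →
      ∃ v₁ v₂, v = v₁ + v₂ ∧ HasSubgradientAt Ψ v₁ p ∧ HasSubgradientAt Φ v₂ p :=
    fun p v => (hqual p v).mp
  have hT : LipschitzWith 1 (reflect proxΨ ∘ reflect proxΦ) := by
    simpa using (lipschitzWith_one_reflect (hPΨ.inner_sub_nonneg hγ hΨ_bot hΨ_convex hzΨ)).comp
      (lipschitzWith_one_reflect (hPΦ.inner_sub_nonneg hγ hΦ_bot hΦ_convex hzΦ))
  have hfix : ∃ y, IsFixedPt (reflect proxΨ ∘ reflect proxΦ) y := by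
    obtain ⟨xs, hxs⟩ := hmin
    obtain ⟨v₁, v, hv, hΨv₁, hΦv⟩ := hsplit xs 0 (hasSubgradientAt_zero_iff.mpr hxs)
    rw [eq_neg_of_add_eq_zero_left hv.symm] at hΨv₁
    exact ⟨_, isFixedPt_reflect_comp_of_hasSubgradientAt hPΨ hPΦ hγ hΨ_bot hΦ_bot hΨv₁ hΦv
      (hΨv₁.ne_top hzΨ) (hΦv.ne_top hzΦ)⟩
  have hμ_sum' : ¬ Summable fun t => μ t * (2 - μ t) := fun hs =>
    ENNReal.ofReal_ne_top <| (ENNReal.ofReal_tsum_of_nonneg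
      (fun t => mul_nonneg (hμ t).1.le (sub_nonneg.mpr (hμ t).2.le)) hs).trans hμ_sum
  obtain ⟨xhat, hfixed, hweak⟩ := krasnoselskiiMann_tendstoWeakly hT hfix
    (fun t => Set.Ioo_subset_Icc_self (hμ t)) hμ_sum' hrec
  exact ⟨xhat, hweak, hasSubgradientAt_zero_iff.mp <| hasSubgradientAt_zero_add_of_isFixedPt
    (hPΨ.hasSubgradientAt hγ hΨ_bot hΨ_convex hzΨ)
    (hPΦ.hasSubgradientAt hγ hΦ_bot hΦ_convex hzΦ) hfixed⟩

/-- Weak convergence of the Douglas–Rachford iteration: the iterates converge weakly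
to some `x̂`, and `prox_{γΦ}(x̂)` minimizes `F = Ψ + Φ`. -/
theorem douglas_rachford_weak_convergence
    {H : Type*} [NormedAddCommGroup H] [InnerProductSpace ℝ H] [CompleteSpace H]
    (Ψ Φ : H → EReal)
    (hΨ_bot : ∀ z, Ψ z ≠ ⊥) (hΨ_top : ∃ z, Ψ z ≠ ⊤)
    (hΦ_bot : ∀ z, Φ z ≠ ⊥) (hΦ_top : ∃ z, Φ z ≠ ⊤)
    (hΨ_lsc : LowerSemicontinuous Ψ) (hΦ_lsc : LowerSemicontinuous Φ)
    (hΨ_convex : ∀ x y : H, ∀ a b : ℝ, 0 ≤ a → 0 ≤ b → a + b = 1 →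
      Ψ (a • x + b • y) ≤ (a : EReal) * Ψ x + (b : EReal) * Ψ y)
    (hΦ_convex : ∀ x y : H, ∀ a b : ℝ, 0 ≤ a → 0 ≤ b → a + b = 1 →
      Φ (a • x + b • y) ≤ (a : EReal) * Φ x + (b : EReal) * Φ y)
    -- qualification condition: `∂(Ψ+Φ) = ∂Ψ + ∂Φ`
    (hqual : ∀ p v : H,
      (∀ z : H, (Ψ p + Φ p) + ((⟪v, z - p⟫ : ℝ) : EReal) ≤ Ψ z + Φ z)
        ↔ ∃ v₁ v₂ : H, v = v₁ + v₂ ∧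
            (∀ z : H, Ψ p + ((⟪v₁, z - p⟫ : ℝ) : EReal) ≤ Ψ z) ∧
            (∀ z : H, Φ p + ((⟪v₂, z - p⟫ : ℝ) : EReal) ≤ Φ z))
    -- `F = Ψ + Φ` has a minimizer
    (hmin : ∃ xs : H, ∀ z : H, Ψ xs + Φ xs ≤ Ψ z + Φ z)
    (γ : ℝ) (hγ : 0 < γ)
    -- the proximity operators of `γΨ` and `γΦ`
    (proxΨ proxΦ : H → H)
    (hproxΨ : ∀ x z : H, (γ : EReal) * Ψ (proxΨ x) + ((‖x - proxΨ x‖ ^ 2 / 2 : ℝ) : EReal)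
        ≤ (γ : EReal) * Ψ z + ((‖x - z‖ ^ 2 / 2 : ℝ) : EReal))
    (hproxΦ : ∀ x z : H, (γ : EReal) * Φ (proxΦ x) + ((‖x - proxΦ x‖ ^ 2 / 2 : ℝ) : EReal)
        ≤ (γ : EReal) * Φ z + ((‖x - z‖ ^ 2 / 2 : ℝ) : EReal))
    (μ : ℕ → ℝ) (hμ : ∀ t, μ t ∈ Set.Ioo (0 : ℝ) 2)
    (hμ_sum : ∑' t, ENNReal.ofReal (μ t * (2 - μ t)) = ⊤)
    (x : ℕ → H)
    (hrec : ∀ t : ℕ, x (t + 1) = (1 - μ t / 2) • x t + (μ t / 2) •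
      ((2 : ℝ) • proxΨ ((2 : ℝ) • proxΦ (x t) - x t) - ((2 : ℝ) • proxΦ (x t) - x t))) :
    ∃ xhat : H,
      (∀ v : H, Filter.Tendsto (fun t => (⟪x t, v⟫ : ℝ)) Filter.atTop (nhds ⟪xhat, v⟫)) ∧
      (∀ z : H, Ψ (proxΦ xhat) + Φ (proxΦ xhat) ≤ Ψ z + Φ z) :=
  douglas_rachford_weak_convergence_general Ψ Φ hΨ_bot hΨ_top hΦ_bot hΦ_top hΨ_convex hΦ_convex
    hqual hmin γ hγ proxΨ proxΦ hproxΨ hproxΦ μ hμ hμ_sum x hrec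
end

section
/- Let A : X → H be a bounded linear operator between Hilbert spaces with ‖A‖² = δ², b ∈ H, and B ⊆ X a nonempty closed convex set. Consider the projected gradient iteration z^{t+1} = P_B(z^t − β_t A*(A z^t − b)) with 0 < inf β_t ≤ sup β_t < 2/δ². If the problem min_{z∈B} ‖A z − b‖²/2 has a solution, then (z^t) converges weakly to a minimizer ẑ, and moreover A z^t converges strongly to A ẑ. -/
open scoped RealInnerProductSpace

open Filter ContinuousLinearMap in
/-- Every bounded sequence in a real Hilbert space has a weak limit along any ultrafilter. -/
lemma pg_exists_weak_limit {X : Type*} [NormedAddCommGroup X] [InnerProductSpace ℝ X]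
    [CompleteSpace X] (x : ℕ → X) (M : ℝ) (hM : ∀ t, ‖x t‖ ≤ M) (U : Ultrafilter ℕ) :
    ∃ xb : X, ∀ v : X, Filter.Tendsto (fun t => (⟪x t, v⟫ : ℝ)) U (nhds ⟪xb, v⟫) := by
  have hlim : ∀ v : X, ∃ a : ℝ, Tendsto (fun t => (⟪x t, v⟫ : ℝ)) U (nhds a) := by
    intro v
    have hcomp : IsCompact (Set.Icc (-(M * ‖v‖)) (M * ‖v‖)) := isCompact_Icc
    have hmem : ∀ t, (⟪x t, v⟫ : ℝ) ∈ Set.Icc (-(M * ‖v‖)) (M * ‖v‖) := by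
      intro t
      have h1 : |(⟪x t, v⟫ : ℝ)| ≤ ‖x t‖ * ‖v‖ := abs_real_inner_le_norm _ _
      have h2 : ‖x t‖ * ‖v‖ ≤ M * ‖v‖ :=
        mul_le_mul_of_nonneg_right (hM t) (norm_nonneg v)
      constructor
      · linarith [neg_abs_le (⟪x t, v⟫ : ℝ)]
      · linarith [le_abs_self (⟪x t, v⟫ : ℝ)]
    have hle : ↑(U.map (fun t => (⟪x t, v⟫ : ℝ)))
        ≤ Filter.principal (Set.Icc (-(M * ‖v‖)) (M * ‖v‖)) :=
      Filter.le_principal_iff.mpr (Filter.mem_map.mpr (Filter.Eventually.of_forall hmem))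
    obtain ⟨a, _, ha⟩ := hcomp.ultrafilter_le_nhds _ hle
    exact ⟨a, ha⟩
  choose L hL using hlim
  have hadd : ∀ v w : X, L (v + w) = L v + L w := by
    intro v w
    have h1 : Tendsto (fun t => (⟪x t, v⟫ : ℝ) + ⟪x t, w⟫) U (nhds (L v + L w)) :=
      (hL v).add (hL w)
    have h2 : (fun t => (⟪x t, v⟫ : ℝ) + ⟪x t, w⟫) = fun t => (⟪x t, v + w⟫ : ℝ) := by
      funext t; rw [inner_add_right]
    rw [h2] at h1
    exact tendsto_nhds_unique (hL (v + w)) h1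
  have hsmul : ∀ (r : ℝ) (v : X), L (r • v) = r * L v := by
    intro r v
    have h1 : Tendsto (fun t => r * (⟪x t, v⟫ : ℝ)) U (nhds (r * L v)) := (hL v).const_mul r
    have h2 : (fun t => r * (⟪x t, v⟫ : ℝ)) = fun t => (⟪x t, r • v⟫ : ℝ) := by
      funext t; rw [real_inner_smul_right]
    rw [h2] at h1
    exact tendsto_nhds_unique (hL (r • v)) h1
  have hbdd : ∀ v : X, ‖L v‖ ≤ M * ‖v‖ := by
    intro v
    rw [Real.norm_eq_abs]
    have h1 : Tendsto (fun t => |(⟪x t, v⟫ : ℝ)|) U (nhds |L v|) := (hL v).abs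
    apply le_of_tendsto h1
    apply Filter.Eventually.of_forall
    intro t
    calc |(⟪x t, v⟫ : ℝ)| ≤ ‖x t‖ * ‖v‖ := abs_real_inner_le_norm _ _
      _ ≤ M * ‖v‖ := mul_le_mul_of_nonneg_right (hM t) (norm_nonneg v)
  let φ : X →ₗ[ℝ] ℝ := { toFun := L, map_add' := hadd, map_smul' := hsmul }
  let ℓ : X →L[ℝ] ℝ := φ.mkContinuous M hbdd
  refine ⟨(InnerProductSpace.toDual ℝ X).symm ℓ, fun v => ?_⟩
  have : (⟪(InnerProductSpace.toDual ℝ X).symm ℓ, v⟫ : ℝ) = ℓ v := by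
    rw [← InnerProductSpace.toDual_apply_apply, LinearIsometryEquiv.apply_symm_apply]
  rw [this]
  exact hL v

set_option maxHeartbeats 1000000 in
open Filter ContinuousLinearMap in
/-- Projected gradient iteration for `min_{z ∈ B} ‖Az − b‖²/2`: weak convergence of
the iterates to a minimizer `ẑ`, and strong convergence of `A zᵗ` to `A ẑ`. -/
theorem projected_gradient_convergence
    {X H : Type*} [NormedAddCommGroup X] [InnerProductSpace ℝ X] [CompleteSpace X]
    [NormedAddCommGroup H] [InnerProductSpace ℝ H] [CompleteSpace H]
    (A : X →L[ℝ] H) (δ : ℝ) (hδ : 0 < δ) (hA : ‖A‖ ^ 2 = δ ^ 2) (b : H)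
    (B : Set X) (hBne : B.Nonempty) (hBclosed : IsClosed B) (hBconv : Convex ℝ B)
    -- the metric projection onto `B`
    (P : X → X) (hP : ∀ w : X, P w ∈ B ∧ ∀ v ∈ B, ‖w - P w‖ ≤ ‖w - v‖)
    (β : ℕ → ℝ) (hβ_lb : ∃ ε > 0, ∀ t, ε ≤ β t)
    (hβ_ub : ∃ c < 2 / δ ^ 2, ∀ t, β t ≤ c)
    -- the problem has a solution
    (hsol : ∃ zs ∈ B, ∀ w ∈ B, ‖A zs - b‖ ^ 2 / 2 ≤ ‖A w - b‖ ^ 2 / 2)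
    (z : ℕ → X)
    (hrec : ∀ t : ℕ, z (t + 1) = P (z t - β t • (ContinuousLinearMap.adjoint A) (A (z t) - b))) :
    ∃ zhat : X, zhat ∈ B ∧
      (∀ w ∈ B, ‖A zhat - b‖ ^ 2 / 2 ≤ ‖A w - b‖ ^ 2 / 2) ∧
      (∀ v : X, Filter.Tendsto (fun t => (⟪z t, v⟫ : ℝ)) Filter.atTop (nhds ⟪zhat, v⟫)) ∧
      Filter.Tendsto (fun t => A (z t)) Filter.atTop (nhds (A zhat)) := by
  obtain ⟨zs, hzsB, hzsmin⟩ := hsol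
  obtain ⟨ε, hε, hβl⟩ := hβ_lb
  obtain ⟨c, hc, hβu⟩ := hβ_ub
  have hεc : ε ≤ c := le_trans (hβl 0) (hβu 0)
  have hδ2 : (0:ℝ) < δ ^ 2 := by positivity
  have hcδ : c * δ ^ 2 < 2 := by rwa [← lt_div_iff₀ hδ2]
  set κ : ℝ := ε * (2 - c * δ ^ 2) with hκdef
  have hκ : 0 < κ := by apply mul_pos hε; linarith
  ----------------------------------------------------------------
  -- Projection facts
  ----------------------------------------------------------------
  have hPmem : ∀ w, P w ∈ B := fun w => (hP w).1
  have hPchar : ∀ w, ∀ v ∈ B, (⟪w - P w, v - P w⟫ : ℝ) ≤ 0 := by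
    intro w
    have hinf : ‖w - P w‖ = ⨅ v : B, ‖w - v‖ := by
      have : Nonempty B := hBne.to_subtype
      apply le_antisymm
      · exact le_ciInf fun v => (hP w).2 v v.2
      · exact ciInf_le ⟨0, Set.forall_mem_range.mpr fun v => norm_nonneg _⟩ (⟨P w, hPmem w⟩ : B)
    exact (norm_eq_iInf_iff_real_inner_le_zero hBconv (hPmem w)).mp hinf
  have hPuniq : ∀ u q, q ∈ B → (∀ v ∈ B, (⟪u - q, v - q⟫ : ℝ) ≤ 0) → P u = q := by
    intro u q hq hvarq
    have h1 : (⟪u - q, P u - q⟫ : ℝ) ≤ 0 := hvarq _ (hPmem u)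
    have h2 : (⟪u - P u, q - P u⟫ : ℝ) ≤ 0 := hPchar u q hq
    have h3 : (⟪P u - q, P u - q⟫ : ℝ) ≤ 0 := by
      have e : (⟪P u - q, P u - q⟫ : ℝ) = ⟪u - q, P u - q⟫ + ⟪u - P u, q - P u⟫ := by
        have e1 : P u - q = (u - q) - (u - P u) := by abel
        rw [e1, inner_sub_left]
        have : (⟪u - P u, (u - q) - (u - P u)⟫ : ℝ) = - ⟪u - P u, q - P u⟫ := by
          rw [show (u - q) - (u - P u) = -(q - P u) by abel, inner_neg_right]
        rw [this]; ring
      rw [e]; linarith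
    have h4 : ‖P u - q‖ ^ 2 ≤ 0 := by rwa [← real_inner_self_eq_norm_sq]
    have h5 : P u - q = 0 := by
      rw [← norm_eq_zero]
      nlinarith [norm_nonneg (P u - q)]
    rw [← sub_eq_zero]; exact h5
  have hPnonexp : ∀ w w', ‖P w - P w'‖ ≤ ‖w - w'‖ := by
    intro w w'
    have h1 : (⟪w - P w, P w' - P w⟫ : ℝ) ≤ 0 := hPchar w _ (hPmem w')
    have h2 : (⟪w' - P w', P w - P w'⟫ : ℝ) ≤ 0 := hPchar w' _ (hPmem w)
    have key : ‖P w - P w'‖ ^ 2 ≤ (⟪w - w', P w - P w'⟫ : ℝ) := by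
      have e : (⟪w - w', P w - P w'⟫ : ℝ) - ‖P w - P w'‖ ^ 2
          = -(⟪w - P w, P w' - P w⟫ : ℝ) - ⟪w' - P w', P w - P w'⟫ := by
        rw [← real_inner_self_eq_norm_sq]
        have e1 : (⟪w - P w, P w' - P w⟫ : ℝ) = - ⟪w - P w, P w - P w'⟫ := by
          rw [show P w' - P w = -(P w - P w') by abel, inner_neg_right]
        rw [e1]
        have e2 : (⟪w - w', P w - P w'⟫ : ℝ)
            = ⟪w - P w, P w - P w'⟫ + ⟪P w - P w', P w - P w'⟫ - ⟪w' - P w', P w - P w'⟫ := by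
          rw [← inner_add_left, ← inner_sub_left]
          congr 1; abel
        rw [e2]; ring
      nlinarith [h1, h2]
    have cs : (⟪w - w', P w - P w'⟫ : ℝ) ≤ ‖w - w'‖ * ‖P w - P w'‖ := real_inner_le_norm _ _
    nlinarith [norm_nonneg (P w - P w'), norm_nonneg (w - w')]
  ----------------------------------------------------------------
  -- Variational inequality at minimizers, and fixed-point property
  ----------------------------------------------------------------
  have hvar : ∀ q ∈ B, (∀ w ∈ B, ‖A q - b‖ ^ 2 / 2 ≤ ‖A w - b‖ ^ 2 / 2) →
      ∀ v ∈ B, (0 : ℝ) ≤ ⟪A q - b, A v - A q⟫ := by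
    intro q hq hmin v hv
    set s : ℝ := ⟪A q - b, A v - A q⟫ with hs
    set m : ℝ := ‖A v - A q‖ ^ 2 with hm
    have key : ∀ θ : ℝ, θ ∈ Set.Ioc (0:ℝ) 1 → 0 ≤ 2 * s + θ * m := by
      intro θ hθ
      have hwB : q + θ • (v - q) ∈ B := by
        have := hBconv hq hv (by linarith [hθ.1.le, hθ.2] : (0:ℝ) ≤ 1 - θ) hθ.1.le (by ring)
        convert this using 1
        module
      have hge : ‖A q - b‖ ^ 2 ≤ ‖A (q + θ • (v - q)) - b‖ ^ 2 := by
        have := hmin _ hwB; linarith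
      have hexp : A (q + θ • (v - q)) - b = (A q - b) + θ • (A v - A q) := by
        simp [map_add, map_smul, map_sub]; abel
      rw [hexp, norm_add_sq_real] at hge
      have hinner : (⟪A q - b, θ • (A v - A q)⟫ : ℝ) = θ * s := real_inner_smul_right _ _ _
      have hnsm : ‖θ • (A v - A q)‖ ^ 2 = θ ^ 2 * m := by
        rw [norm_smul, Real.norm_eq_abs, mul_pow, sq_abs]
      rw [hinner, hnsm] at hge
      have hθ0 := hθ.1
      nlinarith
    have htend : Tendsto (fun θ : ℝ => 2 * s + θ * m) (nhdsWithin 0 (Set.Ioi 0))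
        (nhds (2 * s)) := by
      have : Tendsto (fun θ : ℝ => 2 * s + θ * m) (nhds 0) (nhds (2 * s + 0 * m)) :=
        tendsto_const_nhds.add ((continuous_id.mul continuous_const).tendsto 0)
      simpa using this.mono_left nhdsWithin_le_nhds
    have h2s : (0:ℝ) ≤ 2 * s :=
      ge_of_tendsto htend (by
        filter_upwards [Ioc_mem_nhdsGT_of_mem (Set.mem_Ico.mpr ⟨le_refl 0, one_pos⟩)] with θ hθ
        exact key θ hθ)
    linarith
  have hfix : ∀ q ∈ B, (∀ w ∈ B, ‖A q - b‖ ^ 2 / 2 ≤ ‖A w - b‖ ^ 2 / 2) →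
      ∀ t, P (q - β t • (adjoint A) (A q - b)) = q := by
    intro q hq hmin t
    apply hPuniq _ q hq
    intro v hv
    have e : (q - β t • (adjoint A) (A q - b)) - q = -(β t • (adjoint A) (A q - b)) := by abel
    rw [e, inner_neg_left, real_inner_smul_left, adjoint_inner_left]
    have : A (v - q) = A v - A q := map_sub A v q
    rw [this]
    have h0 : (0:ℝ) ≤ ⟪A q - b, A v - A q⟫ := hvar q hq hmin v hv
    have hβ0 : 0 ≤ β t := le_trans hε.le (hβl t)
    nlinarith
  ----------------------------------------------------------------
  -- Key contraction inequality
  ----------------------------------------------------------------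
  have hdescent : ∀ (u : X) (t : ℕ),
      ‖u - β t • (adjoint A) (A u)‖ ^ 2 ≤ ‖u‖ ^ 2 - κ * ‖A u‖ ^ 2 := by
    intro u t
    have hβ1 := hβl t
    have hβ2 := hβu t
    have hβ0 : 0 < β t := lt_of_lt_of_le hε hβ1
    rw [norm_sub_sq_real]
    have hinner : (⟪u, β t • (adjoint A) (A u)⟫ : ℝ) = β t * ‖A u‖ ^ 2 := by
      rw [real_inner_smul_right, adjoint_inner_right, real_inner_self_eq_norm_sq]
    have hnorm2 : ‖β t • (adjoint A) (A u)‖ ^ 2 ≤ β t ^ 2 * (δ ^ 2 * ‖A u‖ ^ 2) := by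
      rw [norm_smul, Real.norm_eq_abs, mul_pow, sq_abs]
      have h1 : ‖(adjoint A) (A u)‖ ≤ ‖A‖ * ‖A u‖ := by
        calc ‖(adjoint A) (A u)‖ ≤ ‖adjoint A‖ * ‖A u‖ := le_opNorm _ _
          _ = ‖A‖ * ‖A u‖ := by rw [LinearIsometryEquiv.norm_map]
      have h2 : ‖(adjoint A) (A u)‖ ^ 2 ≤ ‖A‖ ^ 2 * ‖A u‖ ^ 2 := by
        nlinarith [norm_nonneg ((adjoint A) (A u)), norm_nonneg (A u), opNorm_nonneg A]
      rw [hA] at h2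
      nlinarith [sq_nonneg (β t)]
    rw [hinner]
    have hfac : κ ≤ β t * (2 - β t * δ ^ 2) := by
      have h1 : ε * (2 - c * δ ^ 2) ≤ β t * (2 - c * δ ^ 2) :=
        mul_le_mul_of_nonneg_right hβ1 (by linarith)
      have h2 : β t * δ ^ 2 ≤ c * δ ^ 2 := mul_le_mul_of_nonneg_right hβ2 hδ2.le
      rw [hκdef]; nlinarith
    nlinarith [norm_nonneg (A u), sq_nonneg (‖A u‖)]
  have hkey : ∀ q ∈ B, (∀ w ∈ B, ‖A q - b‖ ^ 2 / 2 ≤ ‖A w - b‖ ^ 2 / 2) → ∀ t,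
      ‖z (t+1) - q‖ ^ 2 ≤ ‖z t - q‖ ^ 2 - κ * ‖A (z t) - A q‖ ^ 2 := by
    intro q hq hmin t
    have step1 : ‖z (t+1) - q‖ ≤ ‖(z t - q) - β t • (adjoint A) (A (z t - q))‖ := by
      rw [hrec t]
      calc ‖P (z t - β t • (adjoint A) (A (z t) - b)) - q‖
          = ‖P (z t - β t • (adjoint A) (A (z t) - b))
              - P (q - β t • (adjoint A) (A q - b))‖ := by rw [hfix q hq hmin t]
        _ ≤ ‖(z t - β t • (adjoint A) (A (z t) - b)) - (q - β t • (adjoint A) (A q - b))‖ :=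
            hPnonexp _ _
        _ = ‖(z t - q) - β t • (adjoint A) (A (z t - q))‖ := by
            congr 1
            have e3 : A (z t - q) = (A (z t) - b) - (A q - b) := by
              rw [map_sub A (z t) q]; abel
            rw [e3]
            simp only [map_sub, smul_sub]
            abel
    have step2 := hdescent (z t - q) t
    rw [map_sub A (z t) q] at step2
    have h1 : ‖z (t+1) - q‖ ^ 2 ≤ ‖(z t - q) - β t • (adjoint A) (A (z t - q))‖ ^ 2 := by
      have := norm_nonneg (z (t+1) - q)
      nlinarith
    rw [map_sub A (z t) q] at h1
    linarith
  ----------------------------------------------------------------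
  -- Fejér monotonicity and convergence of distances
  ----------------------------------------------------------------
  have hanti : ∀ q ∈ B, (∀ w ∈ B, ‖A q - b‖ ^ 2 / 2 ≤ ‖A w - b‖ ^ 2 / 2) →
      Antitone (fun t => ‖z t - q‖ ^ 2) := by
    intro q hq hmin
    apply antitone_nat_of_succ_le
    intro t
    have := hkey q hq hmin t
    nlinarith [sq_nonneg (‖A (z t) - A q‖), norm_nonneg (A (z t) - A q)]
  have hdconv : ∀ q ∈ B, (∀ w ∈ B, ‖A q - b‖ ^ 2 / 2 ≤ ‖A w - b‖ ^ 2 / 2) →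
      ∃ L : ℝ, Tendsto (fun t => ‖z t - q‖ ^ 2) atTop (nhds L) := by
    intro q hq hmin
    exact ⟨_, tendsto_atTop_ciInf (hanti q hq hmin)
      ⟨0, Set.forall_mem_range.mpr fun t => sq_nonneg _⟩⟩
  -- boundedness of the iterates
  have hbound : ∀ t, ‖z t‖ ≤ ‖z 0 - zs‖ + ‖zs‖ := by
    intro t
    have h1 : ‖z t - zs‖ ^ 2 ≤ ‖z 0 - zs‖ ^ 2 := hanti zs hzsB hzsmin (Nat.zero_le t)
    have h2 : ‖z t - zs‖ ≤ ‖z 0 - zs‖ := by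
      have := Real.sqrt_le_sqrt h1
      rwa [Real.sqrt_sq (norm_nonneg _), Real.sqrt_sq (norm_nonneg _)] at this
    calc ‖z t‖ = ‖(z t - zs) + zs‖ := by rw [sub_add_cancel]
      _ ≤ ‖z t - zs‖ + ‖zs‖ := norm_add_le _ _
      _ ≤ ‖z 0 - zs‖ + ‖zs‖ := by linarith
  ----------------------------------------------------------------
  -- Strong convergence of A (z t) to A zs
  ----------------------------------------------------------------
  have hAz : Tendsto (fun t => A (z t)) atTop (nhds (A zs)) := by
    obtain ⟨L, hL⟩ := hdconv zs hzsB hzsmin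
    have hL' : Tendsto (fun t => ‖z (t+1) - zs‖ ^ 2) atTop (nhds L) :=
      hL.comp (tendsto_add_atTop_nat 1)
    have hdiff : Tendsto (fun t => ‖z t - zs‖ ^ 2 - ‖z (t+1) - zs‖ ^ 2) atTop (nhds 0) := by
      have := hL.sub hL'
      simpa using this
    have hsq : Tendsto (fun t => ‖A (z t) - A zs‖ ^ 2) atTop (nhds 0) := by
      have hub : ∀ t, ‖A (z t) - A zs‖ ^ 2 ≤ (1/κ) * (‖z t - zs‖ ^ 2 - ‖z (t+1) - zs‖ ^ 2) := by
        intro t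
        have hk := hkey zs hzsB hzsmin t
        have h2 : κ * ‖A (z t) - A zs‖ ^ 2 ≤ ‖z t - zs‖ ^ 2 - ‖z (t+1) - zs‖ ^ 2 := by
          linarith
        calc ‖A (z t) - A zs‖ ^ 2 = (1/κ) * (κ * ‖A (z t) - A zs‖ ^ 2) := by
              field_simp
          _ ≤ (1/κ) * (‖z t - zs‖ ^ 2 - ‖z (t+1) - zs‖ ^ 2) :=
              mul_le_mul_of_nonneg_left h2 (by positivity)
      have htu : Tendsto (fun t => (1/κ) * (‖z t - zs‖ ^ 2 - ‖z (t+1) - zs‖ ^ 2)) atTop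
          (nhds 0) := by
        have := hdiff.const_mul (1/κ)
        simpa using this
      exact squeeze_zero (fun t => sq_nonneg _) hub htu
    have hnrm : Tendsto (fun t => ‖A (z t) - A zs‖) atTop (nhds 0) := by
      have hsqrt : Tendsto (fun t => Real.sqrt (‖A (z t) - A zs‖ ^ 2)) atTop (nhds 0) := by
        have := (Real.continuous_sqrt.tendsto 0).comp hsq
        simpa [Function.comp_def] using this
      convert hsqrt using 2 with t
      rw [Real.sqrt_sq (norm_nonneg _)]
    rw [tendsto_iff_norm_sub_tendsto_zero]
    exact hnrm
  ----------------------------------------------------------------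
  -- Weak cluster points along ultrafilters are minimizers
  ----------------------------------------------------------------
  have hzB : ∀ t, 1 ≤ t → z t ∈ B := by
    intro t ht
    obtain ⟨s, rfl⟩ : ∃ s, t = s + 1 := ⟨t - 1, by omega⟩
    rw [hrec s]; exact hPmem _
  have hW : ∀ U : Ultrafilter ℕ, (↑U : Filter ℕ) ≤ atTop →
      ∃ q : X, q ∈ B ∧ (∀ w ∈ B, ‖A q - b‖ ^ 2 / 2 ≤ ‖A w - b‖ ^ 2 / 2) ∧ A q = A zs ∧
        ∀ v : X, Tendsto (fun t => (⟪z t, v⟫ : ℝ)) U (nhds ⟪q, v⟫) := by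
    intro U hU
    obtain ⟨q, hq⟩ := pg_exists_weak_limit z (‖z 0 - zs‖ + ‖zs‖) hbound U
    -- q ∈ B
    have hqB : q ∈ B := by
      have hchar : ∀ t, 1 ≤ t → (⟪q - P q, z t - P q⟫ : ℝ) ≤ 0 := fun t ht =>
        hPchar q (z t) (hzB t ht)
      have htend : Tendsto (fun t => (⟪q - P q, z t - P q⟫ : ℝ)) U
          (nhds (⟪q - P q, q - P q⟫ : ℝ)) := by
        have h1 : Tendsto (fun t => (⟪z t, q - P q⟫ : ℝ)) U (nhds ⟪q, q - P q⟫) := hq _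
        have h2 : Tendsto (fun t => (⟪q - P q, z t⟫ : ℝ) - ⟪q - P q, P q⟫) U
            (nhds ((⟪q - P q, q⟫ : ℝ) - ⟪q - P q, P q⟫)) := by
          apply Tendsto.sub _ tendsto_const_nhds
          simpa only [real_inner_comm] using h1
        have h3 : (fun t => (⟪q - P q, z t⟫ : ℝ) - ⟪q - P q, P q⟫)
            = fun t => (⟪q - P q, z t - P q⟫ : ℝ) := by
          funext t; rw [inner_sub_right]
        have h4 : (⟪q - P q, q⟫ : ℝ) - ⟪q - P q, P q⟫ = ⟪q - P q, q - P q⟫ := by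
          rw [inner_sub_right]
        rw [h3, h4] at h2
        exact h2
      have hle : (⟪q - P q, q - P q⟫ : ℝ) ≤ 0 := by
        apply le_of_tendsto htend
        have : ∀ᶠ t in (U : Filter ℕ), 1 ≤ t := hU (eventually_ge_atTop 1)
        filter_upwards [this] with t ht
        exact hchar t ht
      have : ‖q - P q‖ ^ 2 ≤ 0 := by rwa [← real_inner_self_eq_norm_sq]
      have h0 : q - P q = 0 := by
        rw [← norm_eq_zero]; nlinarith [norm_nonneg (q - P q)]
      have : q = P q := by rwa [sub_eq_zero] at h0
      rw [this]; exact hPmem q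
    -- A q = A zs
    have hAq : A q = A zs := by
      have hh : ∀ h : H, (⟪A q, h⟫ : ℝ) = ⟪A zs, h⟫ := by
        intro h
        have h1 : Tendsto (fun t => (⟪z t, (adjoint A) h⟫ : ℝ)) U (nhds ⟪q, (adjoint A) h⟫) :=
          hq _
        have h2 : (fun t => (⟪z t, (adjoint A) h⟫ : ℝ)) = fun t => (⟪A (z t), h⟫ : ℝ) := by
          funext t; rw [adjoint_inner_right]
        have h3 : (⟪q, (adjoint A) h⟫ : ℝ) = ⟪A q, h⟫ := adjoint_inner_right A q h
        rw [h2, h3] at h1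
        have h4 : Tendsto (fun t => (⟪A (z t), h⟫ : ℝ)) U (nhds ⟪A zs, h⟫) :=
          (hAz.inner (tendsto_const_nhds : Tendsto (fun _ : ℕ => h) atTop _)).mono_left hU
        exact tendsto_nhds_unique h1 h4
      have h5 : (⟪A q - A zs, A q - A zs⟫ : ℝ) = 0 := by
        rw [inner_sub_left]
        have e1 := hh (A q - A zs)
        linarith
      rw [← sub_eq_zero, ← inner_self_eq_zero (𝕜 := ℝ)]
      exact h5
    refine ⟨q, hqB, ?_, hAq, hq⟩
    intro w hw
    rw [hAq]
    exact hzsmin w hw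
  ----------------------------------------------------------------
  -- Uniqueness of weak cluster points
  ----------------------------------------------------------------
  have huniq : ∀ (q q' : X), q ∈ B → q' ∈ B →
      (∀ w ∈ B, ‖A q - b‖ ^ 2 / 2 ≤ ‖A w - b‖ ^ 2 / 2) →
      (∀ w ∈ B, ‖A q' - b‖ ^ 2 / 2 ≤ ‖A w - b‖ ^ 2 / 2) →
      ∀ (U U' : Ultrafilter ℕ), (↑U : Filter ℕ) ≤ atTop → (↑U' : Filter ℕ) ≤ atTop →
      (∀ v : X, Tendsto (fun t => (⟪z t, v⟫ : ℝ)) U (nhds ⟪q, v⟫)) →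
      (∀ v : X, Tendsto (fun t => (⟪z t, v⟫ : ℝ)) U' (nhds ⟪q', v⟫)) → q = q' := by
    intro q q' hqB hq'B hqmin hq'min U U' hU hU' hq hq'
    obtain ⟨Lq, hLq⟩ := hdconv q hqB hqmin
    obtain ⟨Lq', hLq'⟩ := hdconv q' hq'B hq'min
    set a : ℕ → ℝ := fun t => (‖z t - q'‖ ^ 2 - ‖z t - q‖ ^ 2 + ‖q‖ ^ 2 - ‖q'‖ ^ 2) / 2 with ha
    have haeq : ∀ t, a t = ⟪z t, q - q'⟫ := by
      intro t
      rw [ha]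
      simp only []
      rw [norm_sub_sq_real, norm_sub_sq_real, inner_sub_right]
      ring
    have hatop : Tendsto a atTop (nhds ((Lq' - Lq + ‖q‖ ^ 2 - ‖q'‖ ^ 2) / 2)) := by
      apply Tendsto.div_const
      exact ((hLq'.sub hLq).add tendsto_const_nhds).sub tendsto_const_nhds
    set ℓ : ℝ := (Lq' - Lq + ‖q‖ ^ 2 - ‖q'‖ ^ 2) / 2 with hℓ
    have h1 : ℓ = ⟪q, q - q'⟫ := by
      have ht1 : Tendsto a U (nhds ℓ) := hatop.mono_left hU
      have ht2 : Tendsto a U (nhds ⟪q, q - q'⟫) := by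
        have := hq (q - q')
        apply Tendsto.congr _ this
        intro t; exact (haeq t).symm
      exact tendsto_nhds_unique ht1 ht2
    have h2 : ℓ = ⟪q', q - q'⟫ := by
      have ht1 : Tendsto a U' (nhds ℓ) := hatop.mono_left hU'
      have ht2 : Tendsto a U' (nhds ⟪q', q - q'⟫) := by
        have := hq' (q - q')
        apply Tendsto.congr _ this
        intro t; exact (haeq t).symm
      exact tendsto_nhds_unique ht1 ht2
    have h3 : (⟪q - q', q - q'⟫ : ℝ) = 0 := by
      rw [inner_sub_left]
      rw [h1] at h2
      linarith
    rw [← sub_eq_zero, ← inner_self_eq_zero (𝕜 := ℝ)]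
    exact h3
  ----------------------------------------------------------------
  -- Conclusion
  ----------------------------------------------------------------
  set U0 : Ultrafilter ℕ := Ultrafilter.of atTop with hU0
  have hU0le : (↑U0 : Filter ℕ) ≤ atTop := Ultrafilter.of_le _
  obtain ⟨zhat, hzhatB, hzhatmin, hAzhat, hzhatW⟩ := hW U0 hU0le
  refine ⟨zhat, hzhatB, hzhatmin, ?_, ?_⟩
  · intro v
    rw [Filter.tendsto_iff_ultrafilter]
    intro U hU
    obtain ⟨q, hqB, hqmin, _, hqW⟩ := hW U hU
    have : q = zhat := huniq q zhat hqB hzhatB hqmin hzhatmin U U0 hU hU0le hqW hzhatW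
    rw [← this]
    exact hqW v
  · rw [hAzhat]
    exact hAz
end
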